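/- arXiv:1407.4462 — 6 statements merged into one kernel-verified Lean document; each statement's English description precedes it below -/
import Mathlib

section
/- Let σ : ℤ → ℝ be any function and let m ≤ n be natural numbers. Then the double sums (taken in steps of 2) satisfy ∑_{t=-m, step 2}^{m} ∑_{s=-n, step 2}^{n} σ(t+s) = ∑_{t=n-m, step 2}^{n+m} ∑_{s=-t, step 2}^{t} σ(s). -/
open Finset

/- Cut the grid `[0, m] × [0, n]` into the `m + 1` hooks
`{(a, m - i) : a < i} ∪ {(i, b) : m - i ≤ b}`, `i ≤ m`.
Walking along hook `i` from `(0, m - i)` to `(i, n)`, the sum `a + b` increases by one per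
step, running through `m - i, …, n + i`; its `j`-th point is `(min i j, m - i + j - min i j)`. -/
theorem sum_range_sum_range_add_eq_sum_hooks {M : Type*} [AddCommMonoid M] (g : ℕ → M)
    {m n : ℕ} (hmn : m ≤ n) :
    ∑ a ∈ range (m + 1), ∑ b ∈ range (n + 1), g (a + b)
      = ∑ i ∈ range (m + 1), ∑ j ∈ range (n - m + 2 * i + 1), g (m - i + j) := by
  rw [sum_sigma', sum_sigma']
  refine sum_nbij'
    (fun p ↦ ⟨p.1 + (m - (p.1 + p.2)), p.1 + (p.1 + p.2 - m)⟩)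
    (fun p ↦ ⟨min p.1 p.2, m - p.1 + p.2 - min p.1 p.2⟩) ?_ ?_ ?_ ?_ ?_ <;>
  rintro ⟨a, b⟩ h <;>
  simp only [mem_sigma, mem_range, Sigma.mk.inj_iff, heq_eq_eq] at h ⊢
  iterate 4 omega
  exact congrArg g (by omega)

/-- Rearrangement of double step-2 sums:
∑_{t=-m, step 2}^{m} ∑_{s=-n, step 2}^{n} σ(t+s)
  = ∑_{t=n-m, step 2}^{n+m} ∑_{s=-t, step 2}^{t} σ(s),
where the outer sums are indexed by i and the inner by j. -/
theorem step_two_double_sum_rearrangement (σ : ℤ → ℝ) (m n : ℕ) (hmn : m ≤ n) :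
    ∑ i ∈ Finset.range (m + 1), ∑ j ∈ Finset.range (n + 1),
        σ ((-(m : ℤ) + 2 * i) + (-(n : ℤ) + 2 * j))
      = ∑ i ∈ Finset.range (m + 1), ∑ j ∈ Finset.range ((n - m + 2 * i) + 1),
          σ (-((n : ℤ) - m + 2 * i) + 2 * j) := by
  calc _ = ∑ a ∈ range (m + 1), ∑ b ∈ range (n + 1), σ (-(m + n : ℤ) + 2 * ↑(a + b)) :=
        sum_congr rfl fun a _ ↦ sum_congr rfl fun b _ ↦ congrArg σ (by push_cast; ring)
    _ = _ := sum_range_sum_range_add_eq_sum_hooks (fun k ↦ σ (-(m + n : ℤ) + 2 * k)) hmn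
    _ = _ := sum_congr rfl fun i hi ↦ sum_congr rfl fun j _ ↦ congrArg σ (by
        have := mem_range.1 hi
        omega)
end

section
/- Let σ : ℤ → (0,∞) be a submultiplicative weight on ℤ, i.e. σ(s+t) ≤ σ(s)σ(t) for all s,t ∈ ℤ, and define ω_σ(ℓ) := (1/(ℓ+1)) ∑_{r=-ℓ, step 2}^{ℓ} σ(r) for ℓ ∈ ℕ₀. Then for all m ≤ n in ℕ₀, ∑_{t=n-m, step 2}^{n+m} ((t+1)/((m+1)(n+1))) ω_σ(t) ≤ ω_σ(m) ω_σ(n). -/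
/-!
Write `S ℓ = ∑_{r = -ℓ, step 2}^{ℓ} σ r`, so that `ω ℓ = S ℓ / (ℓ + 1)` and the claim becomes
`∑_{t = n-m, step 2}^{n+m} S t ≤ S m * S n`. The Clebsch–Gordan rule `π_m ⊗ π_n ≅ ⊕_t π_t`, read on
weights, says that the multiset `{r + s : r ∈ [-m, m], s ∈ [-n, n]}` (both in steps of 2) is the
disjoint union over `t` of the weight multisets `[-t, t]`. Hence the left side equals
`∑_{r, s} σ (r + s)`, and submultiplicativity bounds it termwise by `∑_{r, s} σ r * σ s = S m * S n`.
-/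

open Finset

/-- The Clebsch–Gordan rule on weights, after the substitutions `r = 2j - m`, `s = 2k - (m + d)`,
`t = d + 2i`, stated for an arbitrary function `g` of the shifted weight `(r + s + 2m + d) / 2`. -/
theorem sum_clebschGordan {M : Type*} [AddCommMonoid M] (g : ℕ → M) (m d : ℕ) :
    ∑ i ∈ range (m + 1), ∑ l ∈ range (d + 2 * i + 1), g (m - i + l) =
      ∑ j ∈ range (m + 1), ∑ k ∈ range (m + d + 1), g (j + k) := by
  induction m generalizing g with
  | zero => simp
  | succ m ih =>
    have hinner : ∑ i ∈ range (m + 1), ∑ l ∈ range (d + 2 * i + 1), g (m + 1 - i + l) =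
        ∑ j ∈ range (m + 1), ∑ k ∈ range (m + d + 1), g (j + k + 1) := by
      rw [← ih (fun s => g (s + 1))]
      refine sum_congr rfl fun i hi => sum_congr rfl fun l _ => ?_
      rw [mem_range] at hi
      congr 1
      omega
    have hlast : ∑ l ∈ range (d + 2 * (m + 1) + 1), g l =
        ∑ k ∈ range (m + d + 2), g k + ∑ j ∈ range (m + 1), g (j + (m + d + 2)) := by
      rw [show d + 2 * (m + 1) + 1 = (m + d + 2) + (m + 1) by ring, sum_range_add]
      simp only [add_comm]
    have hrows : ∑ j ∈ range (m + 1 + 1), ∑ k ∈ range (m + 1 + d + 1), g (j + k) =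
        ∑ j ∈ range (m + 1), ∑ k ∈ range (m + d + 1), g (j + k + 1) +
          ∑ j ∈ range (m + 1), g (j + (m + d + 2)) + ∑ k ∈ range (m + d + 2), g k := by
      rw [sum_range_succ', ← sum_add_distrib, show m + 1 + d + 1 = m + d + 1 + 1 by ring]
      simp only [zero_add]
      congr 1
      refine sum_congr rfl fun j _ => ?_
      rw [sum_range_succ]
      congr 1
      · exact sum_congr rfl fun k _ => by congr 1; ring
      · congr 1; ring
    rw [sum_range_succ, Nat.sub_self, hinner, hrows]
    simp only [zero_add, hlast]
    abel

section StepTwoSum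

variable {R : Type*} [CommSemiring R] [PartialOrder R] [IsOrderedAddMonoid R]

def stepTwoSum (σ : ℤ → R) (ℓ : ℕ) : R :=
  ∑ i ∈ range (ℓ + 1), σ (-ℓ + 2 * i)

theorem sum_stepTwoSum_le_mul (σ : ℤ → R) (hσ : ∀ s t, σ (s + t) ≤ σ s * σ t)
    {m n : ℕ} (hmn : m ≤ n) :
    ∑ i ∈ range (m + 1), stepTwoSum σ (n - m + 2 * i) ≤ stepTwoSum σ m * stepTwoSum σ n := by
  obtain ⟨d, rfl⟩ := Nat.exists_eq_add_of_le hmn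
  let g (s : ℕ) : R := σ (-(m + (m + d) : ℕ) + 2 * s)
  calc ∑ i ∈ range (m + 1), stepTwoSum σ (m + d - m + 2 * i)
      = ∑ i ∈ range (m + 1), ∑ l ∈ range (d + 2 * i + 1), g (m - i + l) := by
        refine sum_congr rfl fun i hi => ?_
        rw [mem_range] at hi
        rw [Nat.add_sub_cancel_left, stepTwoSum]
        refine sum_congr rfl fun l _ => congrArg σ ?_
        push_cast [Nat.cast_sub (Nat.lt_succ_iff.mp hi)]
        ring
    _ = ∑ j ∈ range (m + 1), ∑ k ∈ range (m + d + 1), g (j + k) := sum_clebschGordan g m d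
    _ ≤ ∑ j ∈ range (m + 1), ∑ k ∈ range (m + d + 1), σ (-m + 2 * j) * σ (-(m + d : ℕ) + 2 * k) :=
        sum_le_sum fun j _ => sum_le_sum fun k _ =>
          (congrArg σ (by push_cast; ring) : g (j + k) = _).trans_le (hσ _ _)
    _ = stepTwoSum σ m * stepTwoSum σ (m + d) := by rw [stepTwoSum, stepTwoSum, sum_mul_sum]

end StepTwoSum

theorem averaged_weight_is_hypergroup_weight_general (σ : ℤ → ℝ)
    (hσ : ∀ s t : ℤ, σ (s + t) ≤ σ s * σ t)
    (ω : ℕ → ℝ)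
    (hω : ∀ ℓ : ℕ, ω ℓ = (1 / ((ℓ : ℝ) + 1)) *
      ∑ i ∈ Finset.range (ℓ + 1), σ (-(ℓ : ℤ) + 2 * i))
    (m n : ℕ) (hmn : m ≤ n) :
    ∑ i ∈ Finset.range (m + 1),
        (((n - m + 2 * i : ℕ) + 1 : ℝ) / (((m : ℝ) + 1) * ((n : ℝ) + 1))) * ω (n - m + 2 * i)
      ≤ ω m * ω n := by
  have hω' (ℓ : ℕ) : ω ℓ = stepTwoSum σ ℓ / ((ℓ : ℝ) + 1) := by
    rw [hω, stepTwoSum, one_div_mul_eq_div]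
  have hterm (t : ℕ) : ((t + 1 : ℝ) / (((m : ℝ) + 1) * ((n : ℝ) + 1))) * ω t =
      stepTwoSum σ t / (((m : ℝ) + 1) * ((n : ℝ) + 1)) := by
    rw [hω']
    field_simp
  rw [sum_congr rfl fun i _ => hterm (n - m + 2 * i), ← sum_div, hω' m, hω' n, div_mul_div_comm]
  gcongr
  exact sum_stepTwoSum_le_mul σ hσ hmn

/-- If σ is a submultiplicative weight on ℤ and
ω_σ(ℓ) = (1/(ℓ+1)) ∑_{r=-ℓ, step 2}^{ℓ} σ(r), then for m ≤ n,
∑_{t=n-m, step 2}^{n+m} ((t+1)/((m+1)(n+1))) ω_σ(t) ≤ ω_σ(m) ω_σ(n). -/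
theorem averaged_weight_is_hypergroup_weight (σ : ℤ → ℝ)
    (hσpos : ∀ s : ℤ, 0 < σ s) (hσ : ∀ s t : ℤ, σ (s + t) ≤ σ s * σ t)
    (ω : ℕ → ℝ)
    (hω : ∀ ℓ : ℕ, ω ℓ = (1 / ((ℓ : ℝ) + 1)) *
      ∑ i ∈ Finset.range (ℓ + 1), σ (-(ℓ : ℤ) + 2 * i))
    (m n : ℕ) (hmn : m ≤ n) :
    ∑ i ∈ Finset.range (m + 1),
        (((n - m + 2 * i : ℕ) + 1 : ℝ) / (((m : ℝ) + 1) * ((n : ℝ) + 1))) * ω (n - m + 2 * i)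
      ≤ ω m * ω n :=
  averaged_weight_is_hypergroup_weight_general σ hσ ω hω m n hmn
end

section
/- Fix β > 0 and define σ : ℤ → ℝ by σ(ℓ) = 1 for ℓ ≥ 0 and σ(ℓ) = (1-ℓ)^β for ℓ < 0. Then the function ω_σ(ℓ) := (1/(ℓ+1)) ∑_{r=-ℓ, step 2}^{ℓ} σ(r) on ℕ₀ is equivalent to ω_β(ℓ) := (1+ℓ)^β, i.e. there exist constants c₁, c₂ > 0 with c₁ (1+ℓ)^β ≤ ω_σ(ℓ) ≤ c₂ (1+ℓ)^β for all ℓ ∈ ℕ₀. -/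
/-!
Write `w(r) = 1` for `r ≥ 0` and `w(r) = (1 - r)^β` for `r < 0`. This is antitone, so each of the
`ℓ + 1` terms `w(-ℓ + 2i)` is at most `w(-ℓ) = (1 + ℓ)^β`, giving the upper bound with `c₂ = 1`.
Conversely, the first `⌊ℓ/4⌋ + 1 ≥ (ℓ + 1)/4` terms have `-ℓ + 2i ≤ -ℓ/2`, hence are at least
`((1 + ℓ)/2)^β`, giving the lower bound with `c₁ = 1/(4 · 2^β)`.
-/

open Finset

noncomputable section

/-- The weight `σ` on `ℤ`. -/
def liftedWeight (β : ℝ) (r : ℤ) : ℝ := if 0 ≤ r then 1 else ((1 : ℝ) - r) ^ β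

/-- The weight `ω_σ` on `ℕ`: the mean of `σ` over `-ℓ, -ℓ + 2, …, ℓ`. -/
def averagedWeight (β : ℝ) (ℓ : ℕ) : ℝ :=
  (1 / ((ℓ : ℝ) + 1)) * ∑ i ∈ range (ℓ + 1), liftedWeight β (-(ℓ : ℤ) + 2 * i)

namespace liftedWeight

variable {β : ℝ}

theorem of_nonpos {r : ℤ} (hr : r ≤ 0) : liftedWeight β r = ((1 : ℝ) - r) ^ β := by
  unfold liftedWeight
  split_ifs with h
  · obtain rfl : r = 0 := le_antisymm hr h
    simp
  · rfl

theorem one_le (hβ : 0 ≤ β) (r : ℤ) : 1 ≤ liftedWeight β r := by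
  unfold liftedWeight
  split_ifs with h
  · exact le_rfl
  · have : (r : ℝ) < 0 := by exact_mod_cast not_le.mp h
    exact Real.one_le_rpow (by linarith) hβ

theorem antitone (hβ : 0 ≤ β) : Antitone (liftedWeight β) := by
  intro a b hab
  by_cases hb : 0 ≤ b
  · simpa [liftedWeight, hb] using one_le hβ a
  · have hab' : (a : ℝ) ≤ b := by exact_mod_cast hab
    have hb' : (b : ℝ) < 0 := by exact_mod_cast not_le.mp hb
    rw [of_nonpos (by omega), of_nonpos (by omega)]
    exact Real.rpow_le_rpow (by linarith) (by linarith) hβ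

end liftedWeight

namespace averagedWeight

variable {β : ℝ}

theorem le_rpow (hβ : 0 ≤ β) (ℓ : ℕ) : averagedWeight β ℓ ≤ (1 + (ℓ : ℝ)) ^ β := by
  have hterm : ∀ i ∈ range (ℓ + 1),
      liftedWeight β (-(ℓ : ℤ) + 2 * i) ≤ (1 + (ℓ : ℝ)) ^ β := by
    intro i _
    calc liftedWeight β (-(ℓ : ℤ) + 2 * i) ≤ liftedWeight β (-(ℓ : ℤ)) :=
          liftedWeight.antitone hβ (by omega)
      _ = (1 + (ℓ : ℝ)) ^ β := by
          rw [liftedWeight.of_nonpos (by omega)]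
          push_cast
          ring_nf
  have hsum := sum_le_card_nsmul _ _ _ hterm
  rw [card_range, nsmul_eq_mul] at hsum
  rw [averagedWeight, one_div_mul_eq_div, div_le_iff₀ (by positivity)]
  push_cast at hsum
  linarith

theorem rpow_le (hβ : 0 ≤ β) (ℓ : ℕ) :
    1 / (4 * 2 ^ β) * (1 + (ℓ : ℝ)) ^ β ≤ averagedWeight β ℓ := by
  have hterm : ∀ i ∈ range (ℓ / 4 + 1),
      ((1 + (ℓ : ℝ)) / 2) ^ β ≤ liftedWeight β (-(ℓ : ℤ) + 2 * i) := by
    intro i hi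
    have h4i : 4 * i ≤ ℓ := by have := mem_range_succ_iff.mp hi; omega
    have h4i' : (4 * i : ℝ) ≤ ℓ := by exact_mod_cast h4i
    rw [liftedWeight.of_nonpos (by omega)]
    push_cast
    exact Real.rpow_le_rpow (by positivity) (by linarith) hβ
  have hcard : ((ℓ : ℝ) + 1) / 4 ≤ ((ℓ / 4 + 1 : ℕ) : ℝ) := by
    rw [div_le_iff₀ (by norm_num)]
    exact_mod_cast (by omega : ℓ + 1 ≤ (ℓ / 4 + 1) * 4)
  have hsum : ((ℓ : ℝ) + 1) / 4 * ((1 + (ℓ : ℝ)) / 2) ^ β ≤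
      ∑ i ∈ range (ℓ + 1), liftedWeight β (-(ℓ : ℤ) + 2 * i) :=
    calc ((ℓ : ℝ) + 1) / 4 * ((1 + (ℓ : ℝ)) / 2) ^ β
        ≤ ((ℓ / 4 + 1 : ℕ) : ℝ) * ((1 + (ℓ : ℝ)) / 2) ^ β := by gcongr
      _ ≤ ∑ i ∈ range (ℓ / 4 + 1), liftedWeight β (-(ℓ : ℤ) + 2 * i) := by
          simpa [nsmul_eq_mul] using card_nsmul_le_sum _ _ _ hterm
      _ ≤ ∑ i ∈ range (ℓ + 1), liftedWeight β (-(ℓ : ℤ) + 2 * i) :=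
          sum_le_sum_of_subset_of_nonneg (range_subset_range.2 (by omega))
            fun i _ _ => zero_le_one.trans (liftedWeight.one_le hβ _)
  rw [Real.div_rpow (by positivity) zero_le_two] at hsum
  rw [averagedWeight, one_div_mul_eq_div ((ℓ : ℝ) + 1), le_div_iff₀ (by positivity)]
  calc 1 / (4 * 2 ^ β) * (1 + (ℓ : ℝ)) ^ β * (ℓ + 1)
      = ((ℓ : ℝ) + 1) / 4 * ((1 + (ℓ : ℝ)) ^ β / 2 ^ β) := by ring
    _ ≤ _ := hsum

end averagedWeight

end

/-- For β > 0 and σ(ℓ) = 1 (ℓ ≥ 0), σ(ℓ) = (1-ℓ)^β (ℓ < 0), the averaged weight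
ω_σ(ℓ) = (1/(ℓ+1)) ∑_{r=-ℓ, step 2}^{ℓ} σ(r) is equivalent to (1+ℓ)^β. -/
theorem lifted_weight_equivalent_to_dimension_weight (β : ℝ) (hβ : 0 < β)
    (σ : ℤ → ℝ)
    (hσ : ∀ ℓ : ℤ, σ ℓ = if 0 ≤ ℓ then 1 else ((1 : ℝ) - ℓ) ^ β)
    (ω : ℕ → ℝ)
    (hω : ∀ ℓ : ℕ, ω ℓ = (1 / ((ℓ : ℝ) + 1)) *
      ∑ i ∈ Finset.range (ℓ + 1), σ (-(ℓ : ℤ) + 2 * i)) :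
    ∃ c₁ c₂ : ℝ, 0 < c₁ ∧ 0 < c₂ ∧
      ∀ ℓ : ℕ, c₁ * (1 + (ℓ : ℝ)) ^ β ≤ ω ℓ ∧ ω ℓ ≤ c₂ * (1 + (ℓ : ℝ)) ^ β := by
  obtain rfl : σ = liftedWeight β := funext hσ
  obtain rfl : ω = averagedWeight β := funext hω
  refine ⟨1 / (4 * 2 ^ β), 1, by positivity, one_pos, fun ℓ => ⟨?_, ?_⟩⟩
  · exact averagedWeight.rpow_le hβ.le ℓ
  · simpa using averagedWeight.le_rpow hβ.le ℓ
end

section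
/- Let X be a set, ω : X → (0,∞) with ∑_{x∈X} 1/ω(x)² < ∞, and suppose Ω : X × X → ℂ satisfies |Ω(x,y)| ≤ C·(1/ω(x) + 1/ω(y)) for some constant C > 0 and all x, y. Then Ω ∈ T²(X) with ‖Ω‖_{T²(X)} ≤ 2C·(∑_{x∈X} 1/ω(x)²)^{1/2}. -/
/-!
Writing `u = 1/ω`, split `Ω` along the partition of unity
`a(x,y) + a(y,x) = 1` with `a(x,y) = u(x) / (u(x) + u(y))`. Since `a(x,y) (u(x) + u(y)) = u(x)`,
the piece `a(x,y) Ω(x,y)` is bounded by `C u(x)` and the other piece by `C u(y)`, so each has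
square sums along the relevant variable bounded by `C² ∑ u²`.
-/

section SplitWeight

variable {X : Type*} (u : X → ℝ)

noncomputable def splitWeight (x y : X) : ℝ := u x / (u x + u y)

variable {u}

lemma splitWeight_nonneg (hu : ∀ x, 0 < u x) (x y : X) : 0 ≤ splitWeight u x y :=
  div_nonneg (hu x).le (add_pos (hu x) (hu y)).le

lemma splitWeight_mul_add (hu : ∀ x, 0 < u x) (x y : X) :
    splitWeight u x y * (u x + u y) = u x :=
  div_mul_cancel₀ _ (add_pos (hu x) (hu y)).ne'

lemma splitWeight_add_swap (hu : ∀ x, 0 < u x) (x y : X) :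
    splitWeight u x y + splitWeight u y x = 1 := by
  rw [splitWeight, splitWeight, add_comm (u y), ← add_div, div_self (add_pos (hu x) (hu y)).ne']

lemma norm_splitWeight_smul_le {E : Type*} [SeminormedAddCommGroup E] [NormedSpace ℝ E]
    (hu : ∀ x, 0 < u x) {x y : X} {v : E} {C : ℝ} (hv : ‖v‖ ≤ C * (u x + u y)) :
    ‖splitWeight u x y • v‖ ≤ C * u x := by
  rw [norm_smul, Real.norm_of_nonneg (splitWeight_nonneg hu x y)]
  calc splitWeight u x y * ‖v‖ ≤ splitWeight u x y * (C * (u x + u y)) :=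
        mul_le_mul_of_nonneg_left hv (splitWeight_nonneg hu x y)
    _ = C * (splitWeight u x y * (u x + u y)) := by ring
    _ = C * u x := by rw [splitWeight_mul_add hu]

theorem exists_add_eq_of_norm_le_mul_add {E : Type*} [SeminormedAddCommGroup E]
    [NormedSpace ℝ E] (hu : ∀ x, 0 < u x) {Ω : X → X → E} {C : ℝ}
    (hΩ : ∀ x y, ‖Ω x y‖ ≤ C * (u x + u y)) :
    ∃ f₁ f₂ : X → X → E, (∀ x y, Ω x y = f₁ x y + f₂ x y) ∧
      (∀ x y, ‖f₁ x y‖ ≤ C * u x) ∧ (∀ x y, ‖f₂ x y‖ ≤ C * u y) := by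
  refine ⟨fun x y => splitWeight u x y • Ω x y, fun x y => splitWeight u y x • Ω x y,
    fun x y => ?_, fun x y => norm_splitWeight_smul_le hu (hΩ x y),
    fun x y => norm_splitWeight_smul_le hu ((hΩ x y).trans_eq (by rw [add_comm]))⟩
  rw [← add_smul, splitWeight_add_swap hu, one_smul]

end SplitWeight

section SquareSums

variable {X E : Type*} [SeminormedAddCommGroup E] {f : X → E} {u : X → ℝ} {C : ℝ}

lemma norm_sq_le_of_norm_le_mul (hf : ∀ x, ‖f x‖ ≤ C * u x) (x : X) :
    ‖f x‖ ^ 2 ≤ C ^ 2 * u x ^ 2 := by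
  rw [← mul_pow]
  exact pow_le_pow_left₀ (norm_nonneg _) (hf x) 2

lemma summable_norm_sq_of_norm_le_mul (hu : Summable fun x => u x ^ 2)
    (hf : ∀ x, ‖f x‖ ≤ C * u x) : Summable fun x => ‖f x‖ ^ 2 :=
  (hu.mul_left _).of_nonneg_of_le (fun _ => by positivity) (norm_sq_le_of_norm_le_mul hf)

lemma tsum_norm_sq_le_of_norm_le_mul (hu : Summable fun x => u x ^ 2)
    (hf : ∀ x, ‖f x‖ ≤ C * u x) : ∑' x, ‖f x‖ ^ 2 ≤ C ^ 2 * ∑' x, u x ^ 2 := by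
  rw [← tsum_mul_left]
  exact (summable_norm_sq_of_norm_le_mul hu hf).tsum_le_tsum (norm_sq_le_of_norm_le_mul hf)
    (hu.mul_left _)

end SquareSums

theorem weakly_additive_littlewood_general {X : Type*}
    (ω : X → ℝ) (hωpos : ∀ x, 0 < ω x)
    (hS : Summable fun x => 1 / (ω x) ^ 2)
    (Ω : X → X → ℂ) (C : ℝ)
    (hΩ : ∀ x y, ‖Ω x y‖ ≤ C * (1 / ω x + 1 / ω y)) :
    ∃ f₁ f₂ : X → X → ℂ,
      (∀ x y, Ω x y = f₁ x y + f₂ x y) ∧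
      (∀ y, Summable fun x => ‖f₁ x y‖ ^ 2) ∧
      (∀ x, Summable fun y => ‖f₂ x y‖ ^ 2) ∧
      (∀ y, ∑' x, ‖f₁ x y‖ ^ 2 ≤ C ^ 2 * ∑' x, 1 / (ω x) ^ 2) ∧
      (∀ x, ∑' y, ‖f₂ x y‖ ^ 2 ≤ C ^ 2 * ∑' x, 1 / (ω x) ^ 2) := by
  obtain ⟨f₁, f₂, hsplit, hf₁, hf₂⟩ :=
    exists_add_eq_of_norm_le_mul_add (fun x => one_div_pos.mpr (hωpos x)) hΩ
  have hu : Summable fun x => (1 / ω x) ^ 2 := by simpa only [one_div_pow] using hS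
  have htsum : ∑' x, (1 / ω x) ^ 2 = ∑' x, 1 / (ω x) ^ 2 := by simp only [one_div_pow]
  refine ⟨f₁, f₂, hsplit, fun y => summable_norm_sq_of_norm_le_mul hu (hf₁ · y),
    fun x => summable_norm_sq_of_norm_le_mul hu (hf₂ x), fun y => ?_, fun x => ?_⟩
  · exact htsum ▸ tsum_norm_sq_le_of_norm_le_mul hu (hf₁ · y)
  · exact htsum ▸ tsum_norm_sq_le_of_norm_le_mul hu (hf₂ x)

/-- If ∑ 1/ω(x)² < ∞ and |Ω(x,y)| ≤ C(1/ω(x) + 1/ω(y)), then Ω is a Littlewood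
multiplier with ‖Ω‖_{T²} ≤ 2C(∑ 1/ω(x)²)^{1/2}. -/
theorem weakly_additive_littlewood {X : Type*}
    (ω : X → ℝ) (hωpos : ∀ x, 0 < ω x)
    (hS : Summable fun x => 1 / (ω x) ^ 2)
    (Ω : X → X → ℂ) (C : ℝ) (hC : 0 < C)
    (hΩ : ∀ x y, ‖Ω x y‖ ≤ C * (1 / ω x + 1 / ω y)) :
    ∃ f₁ f₂ : X → X → ℂ,
      (∀ x y, Ω x y = f₁ x y + f₂ x y) ∧
      (∀ y, Summable fun x => ‖f₁ x y‖ ^ 2) ∧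
      (∀ x, Summable fun y => ‖f₂ x y‖ ^ 2) ∧
      (∀ y, ∑' x, ‖f₁ x y‖ ^ 2 ≤ C ^ 2 * ∑' x, 1 / (ω x) ^ 2) ∧
      (∀ x, ∑' y, ‖f₂ x y‖ ^ 2 ≤ C ^ 2 * ∑' x, 1 / (ω x) ^ 2) :=
  weakly_additive_littlewood_general ω hωpos hS Ω C hΩ
end

section
/- Let f : ℕ₀ → (0,∞) be increasing with f(0) = 1, and suppose f(n+m)/(f(n)f(m)) → 0 as n, m → ∞ (along cofinite sets in each variable). Then the function Ω(n,m) := ((1/2)(f(|n-m|)+2) + (1/2)(f(n+m)+2)) / ((f(n)+2)(f(m)+2)) 0-clusters strongly on ℕ₀ × ℕ₀, i.e. lim_{n→∞} limsup_{m→∞} Ω(n,m) = lim_{m→∞} limsup_{n→∞} Ω(n,m) = 0. -/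
/-!
Since `f` is monotone with `f 0 = 1` and `|n - m| ≤ n + m`, the numerator of `Ω n m` is at most
`f (n + m) + 2 ≤ 3 f (n + m)`, while its denominator exceeds `f n f m`. Hence
`0 ≤ Ω n m ≤ 3 f (n + m) / (f n f m)`, so `Ω` tends to `0` jointly in `(n, m)`, and then so do its
iterated limsups. The second iterated limit is the first one, because `Ω` is symmetric.
-/

open Filter Topology Function

theorem tendsto_limsup_of_tendsto_prod_nhds_zero {α β : Type*} {la : Filter α} {lb : Filter β}
    [lb.NeBot] {u : α → β → ℝ} (hu : ∀ a b, 0 ≤ u a b)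
    (h : Tendsto (uncurry u) (la ×ˢ lb) (𝓝 0)) :
    Tendsto (fun a => limsup (u a) lb) la (𝓝 0) := by
  have hsmall : ∀ ε > 0, ∀ᶠ a in la, 0 ≤ limsup (u a) lb ∧ limsup (u a) lb ≤ ε := by
    intro ε hε
    filter_upwards [((tendsto_order.1 h).2 ε hε).curry] with a ha
    have hle : ∀ᶠ b in lb, u a b ≤ ε := ha.mono fun _ => le_of_lt
    exact ⟨le_limsup_of_frequently_le (.of_forall (hu a)) ⟨ε, hle⟩,
      limsup_le_of_le (isCoboundedUnder_le_of_le lb (hu a)) hle⟩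
  refine tendsto_order.2 ⟨fun c hc => ?_, fun ε hε => ?_⟩
  · filter_upwards [hsmall 1 one_pos] with a ha using hc.trans_le ha.1
  · filter_upwards [hsmall (ε / 2) (half_pos hε)] with a ha using ha.2.trans_lt (half_lt_self hε)

noncomputable def chebyshevRatio (f : ℕ → ℝ) (n m : ℕ) : ℝ :=
  ((1 / 2) * (f ((n : ℤ) - m).natAbs + 2) + (1 / 2) * (f (n + m) + 2)) / ((f n + 2) * (f m + 2))

theorem chebyshevRatio_flip (f : ℕ → ℝ) : flip (chebyshevRatio f) = chebyshevRatio f := by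
  funext n m
  have habs : ((m : ℤ) - n).natAbs = ((n : ℤ) - m).natAbs := by omega
  simp only [flip, chebyshevRatio, habs, Nat.add_comm m n, mul_comm (f m + 2)]

section

variable {f : ℕ → ℝ}

theorem chebyshevRatio_nonneg (hf : ∀ n, 0 ≤ f n) (n m : ℕ) : 0 ≤ chebyshevRatio f n m :=
  div_nonneg (by linarith [hf ((n : ℤ) - m).natAbs, hf (n + m)])
    (mul_nonneg (by linarith [hf n]) (by linarith [hf m]))

theorem chebyshevRatio_le (hmono : Monotone f) (hone : ∀ n, 1 ≤ f n) (n m : ℕ) :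
    chebyshevRatio f n m ≤ 3 * (f (n + m) / (f n * f m)) := by
  have habs : f ((n : ℤ) - m).natAbs ≤ f (n + m) := hmono (by omega)
  have hpos : 0 < f n * f m := mul_pos (one_pos.trans_le (hone n)) (one_pos.trans_le (hone m))
  calc chebyshevRatio f n m ≤ 3 * f (n + m) / (f n * f m) :=
        div_le_div₀ (by linarith [hone (n + m)]) (by linarith [hone (n + m)]) hpos
          (by nlinarith [hone n, hone m])
    _ = 3 * (f (n + m) / (f n * f m)) := mul_div_assoc _ _ _

end

theorem chebyshev_zero_clusters_general (f : ℕ → ℝ)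
    (hfmono : Monotone f) (hf0 : f 0 = 1)
    (hlim : Filter.Tendsto (fun p : ℕ × ℕ => f (p.1 + p.2) / (f p.1 * f p.2))
      (Filter.cofinite ×ˢ Filter.cofinite) (nhds 0))
    (Ω : ℕ → ℕ → ℝ)
    (hΩ : ∀ n m, Ω n m =
      ((1 / 2) * (f ((n : ℤ) - m).natAbs + 2) + (1 / 2) * (f (n + m) + 2)) /
        ((f n + 2) * (f m + 2))) :
    Filter.Tendsto (fun n => Filter.limsup (fun m => Ω n m) Filter.cofinite)
        Filter.cofinite (nhds 0) ∧
    Filter.Tendsto (fun m => Filter.limsup (fun n => Ω n m) Filter.cofinite)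
        Filter.cofinite (nhds 0) := by
  obtain rfl : Ω = chebyshevRatio f := funext fun n => funext (hΩ n)
  have hone : ∀ n, 1 ≤ f n := fun n => hf0 ▸ hfmono n.zero_le
  have hnonneg := chebyshevRatio_nonneg fun n => zero_le_one.trans (hone n)
  have hjoint : Tendsto (uncurry (chebyshevRatio f)) (cofinite ×ˢ cofinite) (𝓝 0) := by
    have h3 := hlim.const_mul 3
    rw [mul_zero] at h3
    exact squeeze_zero (fun p => hnonneg p.1 p.2)
      (fun p => chebyshevRatio_le hfmono hone p.1 p.2) h3
  have hrows := tendsto_limsup_of_tendsto_prod_nhds_zero hnonneg hjoint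
  refine ⟨hrows, ?_⟩
  rw [← chebyshevRatio_flip] at hrows
  exact hrows

/-- If f(n+m)/(f(n)f(m)) → 0 as n,m → ∞, then the ratio
Ω(n,m) = ω(δ_n*δ_m)/(ω(n)ω(m)) for ω(n) = f(n)+2 on the Chebyshev hypergroup
0-clusters strongly. -/
theorem chebyshev_zero_clusters (f : ℕ → ℝ) (hfpos : ∀ n, 0 < f n)
    (hfmono : Monotone f) (hf0 : f 0 = 1)
    (hlim : Filter.Tendsto (fun p : ℕ × ℕ => f (p.1 + p.2) / (f p.1 * f p.2))
      (Filter.cofinite ×ˢ Filter.cofinite) (nhds 0))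
    (Ω : ℕ → ℕ → ℝ)
    (hΩ : ∀ n m, Ω n m =
      ((1 / 2) * (f ((n : ℤ) - m).natAbs + 2) + (1 / 2) * (f (n + m) + 2)) /
        ((f n + 2) * (f m + 2))) :
    Filter.Tendsto (fun n => Filter.limsup (fun m => Ω n m) Filter.cofinite)
        Filter.cofinite (nhds 0) ∧
    Filter.Tendsto (fun m => Filter.limsup (fun n => Ω n m) Filter.cofinite)
        Filter.cofinite (nhds 0) :=
  chebyshev_zero_clusters_general f hfmono hf0 hlim Ω hΩ
end

section
/- For the Chebyshev hypergroup on ℕ₀ (with convolution δ_n * δ_m = (1/2)δ_{|n-m|} + (1/2)δ_{n+m}) and the polynomial weight ω_β(n) = (1+n)^β with β > 1, the quantity Ω(n,m) = ω_β(δ_n*δ_m)/(ω_β(n)ω_β(m)) satisfies Ω(n,m) ≤ C·(1/(1+n)^β + 1/(1+m)^β) for C = max{1, 2^{β-1}}, and moreover ∑_{n∈ℕ₀} 1/(1+n)^{2β} < ∞. -/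
/-!
Write `a = 1 + n`, `b = 1 + m`. Since `1 + |n - m| ≤ max a b`, the first half of the numerator
is at most `a ^ β + b ^ β`; since `1 + n + m ≤ a + b`, convexity of `t ↦ t ^ β` bounds the second
half by `2 ^ (β - 1) (a ^ β + b ^ β)`. Dividing by `a ^ β b ^ β` gives the estimate for `Ω`, and
the series is a shifted `p`-series with exponent `2β > 1`.
-/

open scoped NNReal

lemma Real.rpow_add_le_mul_rpow_add_rpow {x y p : ℝ} (hx : 0 ≤ x) (hy : 0 ≤ y) (hp : 1 ≤ p) :
    (x + y) ^ p ≤ 2 ^ (p - 1) * (x ^ p + y ^ p) := by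
  lift x to ℝ≥0 using hx
  lift y to ℝ≥0 using hy
  exact_mod_cast NNReal.rpow_add_le_mul_rpow_add_rpow x y hp

lemma Real.rpow_le_rpow_add_rpow_of_le_max {x a b p : ℝ} (hx : 0 ≤ x) (ha : 0 ≤ a) (hb : 0 ≤ b)
    (hp : 0 ≤ p) (h : x ≤ max a b) : x ^ p ≤ a ^ p + b ^ p :=
  calc x ^ p ≤ max a b ^ p := Real.rpow_le_rpow hx h hp
    _ = max (a ^ p) (b ^ p) := Real.rpow_max ha hb hp
    _ ≤ a ^ p + b ^ p :=
      max_le_add_of_nonneg (Real.rpow_nonneg ha p) (Real.rpow_nonneg hb p)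

lemma one_add_abs_sub_le_max {x y : ℝ} (hx : 0 ≤ x) (hy : 0 ≤ y) :
    1 + |x - y| ≤ max (1 + x) (1 + y) := by
  rw [max_add_add_left, add_le_add_iff_left, abs_sub_le_iff]
  constructor <;> linarith [le_max_left x y, le_max_right x y]

/-- The left-hand side is `ω_p(δ_x * δ_y)` for the Chebyshev hypergroup. -/
lemma chebyshev_weight_le {x y p : ℝ} (hx : 0 ≤ x) (hy : 0 ≤ y) (hp : 1 ≤ p) :
    (1 / 2) * (1 + |x - y|) ^ p + (1 / 2) * (1 + x + y) ^ p ≤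
      max 1 ((2 : ℝ) ^ (p - 1)) * ((1 + x) ^ p + (1 + y) ^ p) := by
  set S := (1 + x) ^ p + (1 + y) ^ p
  have hS : 0 ≤ S := by positivity
  have h_diff : (1 + |x - y|) ^ p ≤ S :=
    Real.rpow_le_rpow_add_rpow_of_le_max (by positivity) (by positivity) (by positivity)
      (by positivity) (one_add_abs_sub_le_max hx hy)
  have h_sum : (1 + x + y) ^ p ≤ 2 ^ (p - 1) * S :=
    calc (1 + x + y) ^ p ≤ ((1 + x) + (1 + y)) ^ p :=
          Real.rpow_le_rpow (by positivity) (by linarith) (by linarith)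
      _ ≤ 2 ^ (p - 1) * S := Real.rpow_add_le_mul_rpow_add_rpow (by positivity) (by positivity) hp
  have h_one : S ≤ max 1 ((2 : ℝ) ^ (p - 1)) * S := le_mul_of_one_le_left hS (le_max_left _ _)
  have h_two : 2 ^ (p - 1) * S ≤ max 1 ((2 : ℝ) ^ (p - 1)) * S :=
    mul_le_mul_of_nonneg_right (le_max_right _ _) hS
  linarith

/-- For the Chebyshev hypergroup and the polynomial weight ω_β(n) = (1+n)^β with
β > 1: Ω(n,m) = ω_β(δ_n*δ_m)/(ω_β(n)ω_β(m)) ≤ C(1/(1+n)^β + 1/(1+m)^β) with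
C = max{1, 2^{β-1}}, and ∑ 1/(1+n)^{2β} < ∞. -/
theorem chebyshev_operator_algebra (β : ℝ) (hβ : 1 < β)
    (Ω : ℕ → ℕ → ℝ)
    (hΩ : ∀ n m, Ω n m =
      ((1 / 2) * (1 + ((((n : ℤ) - m).natAbs : ℝ))) ^ β + (1 / 2) * (1 + (n : ℝ) + m) ^ β) /
        ((1 + (n : ℝ)) ^ β * (1 + (m : ℝ)) ^ β)) :
    (∀ n m : ℕ, Ω n m ≤
        max 1 ((2 : ℝ) ^ (β - 1)) * (1 / (1 + (n : ℝ)) ^ β + 1 / (1 + (m : ℝ)) ^ β)) ∧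
    Summable fun n : ℕ => 1 / ((1 + (n : ℝ)) ^ (2 * β)) := by
  refine ⟨fun n m => ?_, ?_⟩
  · have hn : 0 < (1 + (n : ℝ)) ^ β := by positivity
    have hm : 0 < (1 + (m : ℝ)) ^ β := by positivity
    have h_abs : ((((n : ℤ) - m).natAbs : ℝ)) = |(n : ℝ) - m| := by
      rw [Nat.cast_natAbs]; push_cast; rfl
    rw [hΩ, h_abs, div_le_iff₀ (mul_pos hn hm)]
    refine (chebyshev_weight_le n.cast_nonneg m.cast_nonneg hβ.le).trans_eq ?_
    field_simp
    ring
  · have h_pseries := (summable_nat_add_iff 1).mpr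
      (Real.summable_one_div_nat_rpow.mpr (by linarith : 1 < 2 * β))
    refine h_pseries.congr fun n => ?_
    push_cast
    ring_nf
end
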